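/- arXiv:2604.04975 — 3 statements merged into one kernel-verified Lean document; each statement's English description precedes it below -/
import Mathlib

section
/- There exists a Steiner system S(2,7,505): a set V with 505 elements together with a family 𝓑 of 7-element subsets of V (blocks) such that every 2-element subset of V is contained in exactly one block of 𝓑. -/
namespace Steiner505

abbrev V5 : Type := ZMod 505

def bb : List (List V5) :=
  [[0, 101, 390, 185, 405, 95, 440],
   [0, 202, 80, 25, 355, 395, 155],
   [0, 180, 156, 261, 53, 287, 179],
   [0, 435, 276, 151, 288, 197, 239],
   [0, 420, 61, 306, 393, 232, 384],
   [0, 5, 341, 386, 268, 22, 19],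
   [0, 475, 176, 411, 8, 272, 189],
   [0, 215, 187, 247, 291, 43, 439],
   [0, 225, 292, 437, 476, 348, 194],
   [0, 165, 167, 307, 376, 33, 149],
   [0, 20, 412, 77, 471, 408, 419],
   [0, 385, 457, 447, 406, 178, 314]]

def triples : List (ℕ × V5 × V5) :=
  (List.range 12).flatMap fun i =>
    ((bb.getD i []).flatMap fun a => (bb.getD i []).map fun b => (i, a, b)).filter
      fun t => decide (t.2.1 ≠ t.2.2)

def diffs : List V5 := triples.map fun t => t.2.1 - t.2.2

set_option maxRecDepth 1000000 in
set_option maxHeartbeats 4000000 in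
lemma diffs_nodup : diffs.Nodup := by decide

set_option maxRecDepth 1000000 in
set_option maxHeartbeats 2000000 in
lemma zero_not_mem_diffs : (0 : V5) ∉ diffs := by decide

set_option maxRecDepth 1000000 in
set_option maxHeartbeats 2000000 in
lemma diffs_length : diffs.length = 504 := by decide

set_option maxRecDepth 100000 in
lemma bb_facts : ∀ l ∈ bb, l.length = 7 ∧ l.Nodup := by decide

lemma mem_triples {t : ℕ × V5 × V5} :
    t ∈ triples ↔ t.1 < 12 ∧ t.2.1 ∈ bb.getD t.1 [] ∧ t.2.2 ∈ bb.getD t.1 [] ∧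
      t.2.1 ≠ t.2.2 := by
  obtain ⟨i, a, b⟩ := t
  simp only [triples, List.mem_flatMap, List.mem_range, List.mem_filter, List.mem_map,
    decide_eq_true_eq]
  constructor
  · rintro ⟨j, hj, hmem, hne⟩
    obtain ⟨a', ha', b', hb', heq⟩ := hmem
    injection heq with h1 h23
    injection h23 with h2 h3
    subst h1; subst h2; subst h3
    exact ⟨hj, ha', hb', hne⟩
  · rintro ⟨h1, h2, h3, h4⟩
    exact ⟨i, h1, ⟨a, h2, b, h3, rfl⟩, h4⟩

lemma mem_diffs_of_ne_zero {d : V5} (hd : d ≠ 0) : d ∈ diffs := by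
  have hcard : diffs.toFinset.card = 504 := by
    rw [List.toFinset_card_of_nodup diffs_nodup, diffs_length]
  have hsub : diffs.toFinset ⊆ (Finset.univ : Finset V5).erase 0 := by
    intro x hx
    rw [List.mem_toFinset] at hx
    refine Finset.mem_erase.mpr ⟨?_, Finset.mem_univ x⟩
    rintro rfl; exact zero_not_mem_diffs hx
  have hcard' : ((Finset.univ : Finset V5).erase 0).card = 504 := by
    rw [Finset.card_erase_of_mem (Finset.mem_univ 0), Finset.card_univ, ZMod.card]
  have : diffs.toFinset = (Finset.univ : Finset V5).erase 0 :=
    Finset.eq_of_subset_of_card_le hsub (le_of_eq (hcard'.trans hcard.symm))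
  rw [← List.mem_toFinset, this]
  exact Finset.mem_erase.mpr ⟨hd, Finset.mem_univ d⟩

lemma triples_inj : ∀ ⦃t⦄, t ∈ triples → ∀ ⦃u⦄, u ∈ triples →
    t.2.1 - t.2.2 = u.2.1 - u.2.2 → t = u :=
  List.inj_on_of_nodup_map diffs_nodup

/-- blocks of the design: translates of base blocks -/
def blockT (i : ℕ) (s : V5) : Finset V5 := (bb.getD i []).toFinset.image (· + s)

def design : Finset (Finset V5) :=
  (Finset.univ : Finset (Fin 12 × V5)).image fun p => blockT p.1 p.2

set_option maxRecDepth 100000 in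
lemma bb_getD_mem {i : ℕ} (h : i < 12) : bb.getD i [] ∈ bb := by
  interval_cases i <;> decide

lemma card_blockT {i : ℕ} (h : i < 12) (s : V5) : (blockT i s).card = 7 := by
  obtain ⟨hlen, hnd⟩ := bb_facts _ (bb_getD_mem h)
  rw [blockT, Finset.card_image_of_injective _ (add_left_injective s),
    List.toFinset_card_of_nodup hnd, hlen]

lemma mem_blockT {i : ℕ} {s x : V5} :
    x ∈ blockT i s ↔ ∃ a ∈ bb.getD i [], a + s = x := by
  simp only [blockT, Finset.mem_image, List.mem_toFinset]

theorem main :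
    ∃ (V : Type) (_ : Fintype V), Fintype.card V = 505 ∧
      ∃ 𝓑 : Finset (Finset V),
        (∀ b ∈ 𝓑, b.card = 7) ∧
        ∀ p : Finset V, p.card = 2 → ∃! b, b ∈ 𝓑 ∧ p ⊆ b := by
  refine ⟨V5, inferInstance, ZMod.card 505, design, ?_, ?_⟩
  · intro b hb
    obtain ⟨⟨i, s⟩, -, rfl⟩ := Finset.mem_image.mp hb
    exact card_blockT i.2 s
  · intro p hp
    obtain ⟨x, y, hxy, rfl⟩ := Finset.card_eq_two.mp hp
    have hd : x - y ≠ 0 := sub_ne_zero.mpr hxy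
    obtain ⟨t, ht, htd⟩ := List.mem_map.mp (mem_diffs_of_ne_zero hd)
    obtain ⟨i, a, b⟩ := t
    obtain ⟨hi12, ha, hb, hab⟩ := mem_triples.mp ht
    simp only at htd ha hb hab hi12
    -- witness block
    refine ⟨blockT i (x - a), ⟨?_, ?_⟩, ?_⟩
    · exact Finset.mem_image.mpr ⟨(⟨i, hi12⟩, x - a), Finset.mem_univ _, rfl⟩
    · intro z hz
      rcases Finset.mem_insert.mp hz with rfl | hz
      · exact mem_blockT.mpr ⟨a, ha, by ring⟩
      · rw [Finset.mem_singleton] at hz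
        subst hz
        exact mem_blockT.mpr ⟨b, hb, by linear_combination -htd⟩
    · rintro c ⟨hc, hsub⟩
      obtain ⟨⟨j, u⟩, -, rfl⟩ := Finset.mem_image.mp hc
      have hx := mem_blockT.mp (hsub (Finset.mem_insert_self x {y}))
      have hy := mem_blockT.mp (hsub (Finset.mem_insert_of_mem (Finset.mem_singleton_self y)))
      obtain ⟨a', ha', hax⟩ := hx
      obtain ⟨b', hb', hby⟩ := hy
      have ha'b' : a' ≠ b' := by
        rintro rfl; exact hxy (hax ▸ hby ▸ rfl)
      have htrip : ((j : ℕ), a', b') ∈ triples :=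
        mem_triples.mpr ⟨j.2, ha', hb', ha'b'⟩
      have hdiff : ((j : ℕ), a', b').2.1 - ((j : ℕ), a', b').2.2 = (i, a, b).2.1 - (i, a, b).2.2 := by
        simp only
        rw [htd]
        linear_combination hax - hby
      have heq2 := triples_inj htrip ht hdiff
      have h1 : (j : ℕ) = i := congrArg Prod.fst heq2
      have h2 : a' = a := congrArg (fun p => p.2.1) heq2
      have hu : u = x - a := by rw [← h2]; linear_combination hax
      show blockT (j : ℕ) u = blockT i (x - a)
      rw [h1, hu]

end Steiner505

/-- There exists a Steiner system S(2,7,505). -/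
theorem exists_steiner_system_2_7_505 :
    ∃ (V : Type) (_ : Fintype V), Fintype.card V = 505 ∧
      ∃ 𝓑 : Finset (Finset V),
        (∀ b ∈ 𝓑, b.card = 7) ∧
        ∀ p : Finset V, p.card = 2 → ∃! b, b ∈ 𝓑 ∧ p ⊆ b :=
  Steiner505.main
end

section
/- There exists a Steiner system S(2,8,624): a set V with 624 elements together with a family 𝓑 of 8-element subsets of V (blocks) such that every 2-element subset of V is contained in exactly one block of 𝓑. -/
set_option maxRecDepth 4000

namespace Steiner624

abbrev Z := ZMod 623

def Bdata : List (List Nat) := [[0,9,21,169,184,215,274,278],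
  [0,72,106,168,226,323,355,474],
  [0,54,92,98,225,348,562,576],
  [0,113,135,161,247,292,432,554],
  [0,42,71,107,281,341,457,467],
  [0,233,236,336,379,541,568,621],
  [0,19,183,196,540,590,607,618],
  [0,152,218,322,359,495,582,583],
  [0,84,222,295,303,380,498,593],
  [0,49,246,383,491,530,548,555],
  [0,23,79,99,190,392,502,572]]

def gData : List (Nat × Nat) := [(0,0),(7,582),(5,621),(5,233),(0,274),(6,618),(2,92),(9,548),(8,295),(0,0),(4,457),(6,607),(0,9),(6,183),(2,562),(0,169),(6,607),(6,590),(9,530),(6,0),(10,79),(0,0),(3,113),(10,0),(6,618),(9,530),(3,135),(5,541),(6,590),(4,42),(8,593),(0,184),(1,323),(6,590),(1,72),(6,607),(4,71),(7,322),(2,54),(9,491),(7,583),(7,582),(4,0),(5,336),(2,54),(3,247),(0,169),(2,576),(3,113),(9,0),(6,540),(10,572),(6,590),(5,568),(2,0),(5,568),(10,23),(9,491),(1,168),(0,215),(4,281),(2,562),(1,106),(0,215),(9,491),(4,42),(7,152),(6,540),(9,555),(3,554),(10,502),(4,0),(1,0),(8,222),(10,572),(9,548),(10,23),(8,303),(6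,540),(10,0),(5,541),(8,222),(5,541),(6,540),(8,0),(8,295),(3,161),(7,495),(7,495),(0,0),(0,184),(10,99),(2,0),(9,530),(0,184),(8,498),(1,72),(1,226),(2,0),(10,0),(5,236),(2,576),(6,540),(5,233),(7,218),(0,169),(1,0),(4,0),(9,383),(0,169),(10,392),(10,79),(3,135),(3,0),(8,593),(2,562),(4,341),(9,555),(8,380),(1,355),(1,106),(10,502),(3,432),(2,225),(9,548),(8,498),(4,341),(2,98),(7,495),(1,226),(10,572),(3,161),(9,491),(2,92),(3,113),(3,0),(7,359),(9,246),(8,84),(2,576),(3,292),(7,218),(9,530),(5,236),(10,502),(2,576),(5,233),(9,383),(0,21),(1,474),(10,572),(1,323),(7,0),(2,562),(1,72),(1,168),(4,467),(3,135),(8,222),(2,562),(0,9),(3,0),(5,379),(0,21),(6,19),(9,383),(4,457),(10,23),(1,0),(0,0),(7,152),(2,54),(9,383),(7,322),(4,107),(0,9),(4,281),(6,19),(0,0),(3,113),(10,392),(9,491),(3,554),(6,0),(0,0),(3,247),(4,281),(1,168),(6,618),(5,379),(10,0),(3,432),(7,583),(7,582),(0,21),(8,303),(6,0),(9,49),(4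,467),(6,607),(10,502),(6,618),(10,190),(8,295),(3,554),(5,336),(0,9),(7,152),(4,457),(8,498),(4,71),(8,84),(6,607),(8,380),(2,348),(0,0),(6,590),(1,106),(7,0),(8,84),(10,502),(1,474),(8,0),(7,359),(7,359),(2,0),(1,0),(4,467),(2,348),(6,590),(3,554),(10,392),(5,336),(5,0),(4,107),(5,621),(5,0),(4,457),(5,621),(4,42),(9,383),(10,572),(5,379),(8,380),(5,379),(9,246),(9,0),(3,0),(1,226),(1,106),(2,98),(1,72),(8,593),(0,21),(10,392),(1,474),(2,92),(0,21),(7,583),(7,582),(7,322),(7,322),(3,292),(4,467),(7,359),(0,9),(6,540),(0,0),(1,355),(0,9),(4,71),(3,161),(2,576),(4,457),(0,0),(2,348),(8,222),(7,218),(0,0),(6,540),(7,495),(4,0),(4,341),(1,72),(9,246),(5,336),(2,562),(5,336),(5,568),(9,383),(8,303),(5,568),(3,0),(10,99),(2,54),(8,0),(8,84),(3,135),(8,295),(4,42),(1,323),(7,322),(9,246),(8,0),(3,432),(5,236),(1,168),(3,247),(5,233),(9,246),(10,392),(10,502),(10,190),(10,79),(9,555),(5,541),(3,554),(1,474),(5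,541),(3,113),(8,303),(9,548),(7,0),(1,0),(4,341),(8,593),(3,432),(8,380),(8,295),(2,348),(10,392),(3,292),(5,236),(8,593),(9,49),(5,233),(5,0),(2,225),(5,621),(9,530),(1,355),(4,0),(4,281),(7,152),(6,196),(0,278),(7,495),(8,498),(2,0),(0,274),(4,107),(2,225),(3,432),(4,341),(0,278),(1,0),(0,0),(6,183),(0,274),(7,0),(4,107),(3,554),(7,583),(7,582),(7,218),(7,218),(0,278),(2,348),(1,106),(10,23),(0,274),(8,222),(1,323),(2,348),(1,355),(1,474),(3,247),(9,246),(9,491),(5,0),(8,0),(5,621),(10,190),(9,0),(4,281),(5,236),(4,71),(5,236),(5,233),(4,341),(5,233),(5,568),(10,0),(3,161),(6,196),(2,576),(4,71),(1,226),(2,225),(7,583),(7,582),(8,222),(1,72),(10,99),(8,303),(7,218),(1,323),(6,183),(0,215),(2,562),(8,593),(6,196),(8,295),(4,281),(8,84),(4,42),(7,359),(0,215),(5,541),(3,135),(8,498),(10,392),(6,196),(10,79),(6,183),(4,42),(9,246),(6,196),(8,498),(0,215),(7,152),(7,152),(3,0),(10,190),(5,568),(6,183),(1,355),(4,467),(3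,432),(0,184),(6,183),(3,113),(9,49),(10,572),(3,292),(0,0),(6,196),(4,457),(0,184),(4,281),(7,495),(9,555),(2,225),(7,322),(0,169),(1,168),(10,190),(4,0),(9,548),(6,183),(0,184),(5,541),(3,161),(0,169),(2,98),(8,380),(3,292),(4,0),(1,323),(1,226),(2,92),(7,152),(1,474),(10,99),(1,0),(0,169),(9,530),(5,379),(2,98),(10,23),(5,379),(9,49),(7,359),(3,432),(2,92),(8,222),(9,383),(7,495),(3,135),(3,247),(2,225),(9,0),(3,292),(10,79),(1,355),(7,0),(2,225),(4,467),(8,0),(9,49),(2,348),(3,554),(10,0),(1,226),(1,474),(8,498),(9,49),(4,457),(2,54),(8,84),(3,113),(3,247),(10,190),(10,502),(0,278),(9,491),(4,107),(1,106),(0,274),(7,322),(5,336),(6,19),(2,54),(5,336),(10,99),(2,98),(1,323),(1,168),(8,593),(0,278),(9,0),(2,92),(10,190),(0,274),(0,0),(7,583),(7,582),(3,247),(8,380),(8,84),(6,0),(5,0),(8,303),(5,621),(10,79),(6,618),(8,380),(10,99),(9,0),(10,23),(8,295),(1,72),(4,71),(10,572),(3,0),(9,0),(6,607),(7,218),(4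,107),(9,555),(0,278),(1,168),(2,0),(4,341),(0,274),(1,226),(9,548),(10,79),(5,0),(2,54),(5,621),(6,19),(10,0),(6,590),(9,49),(3,161),(2,0),(0,215),(3,292),(2,98),(5,379),(4,42),(7,0),(7,0),(9,530),(2,92),(7,359),(4,107),(6,19),(1,106),(6,0),(1,355),(0,215),(8,0),(4,71),(6,618),(5,568),(3,161),(9,555),(6,19),(10,23),(3,135),(0,21),(10,99),(6,19),(9,548),(6,607),(6,0),(0,184),(2,576),(6,196),(0,21),(6,618),(4,467),(0,9),(8,303),(9,555),(2,98),(6,0),(0,278),(5,236),(5,0),(7,583)]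

def Bn (i : Nat) : List Nat := Bdata.getD i []

def natg (v : Nat) : Nat × Nat := gData.getD v (0, 0)

/-! ### Boolean computational facts -/

lemma F1 : ((List.range 11).all fun i => ((Bn i).length == 8) &&
    (Bn i).all (fun a => a < 623)) = true := by rfl

lemma FN : ((List.range 11).all fun i => decide (Bn i).Nodup) = true := by rfl

set_option maxHeartbeats 2000000 in
lemma F4 : ((List.range 623).all fun v => (v % 89 == 0) ||
    ((natg v).1 < 11 && (Bn (natg v).1).elem (natg v).2 &&
     (Bn (natg v).1).elem (((natg v).2 + v) % 623))) = true := by rfl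

lemma F5 : ((List.range 11).all fun i => (Bn i).all fun xv => (Bn i).all fun yv =>
    (xv == yv) || ((((yv + (623 - xv)) % 623) % 89 != 0) &&
      ((natg ((yv + (623 - xv)) % 623)).1 == i) &&
      ((natg ((yv + (623 - xv)) % 623)).2 == xv))) = true := by rfl

/-! ### Extracting Nat-level facts -/

lemma Bn_len {i : Nat} (hi : i < 11) : (Bn i).length = 8 := by
  have := (List.all_eq_true.mp F1) i (List.mem_range.mpr hi)
  simp only [Bool.and_eq_true, beq_iff_eq, List.all_eq_true, decide_eq_true_eq] at this
  exact this.1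

lemma Bn_lt {i : Nat} (hi : i < 11) {a : Nat} (ha : a ∈ Bn i) : a < 623 := by
  have := (List.all_eq_true.mp F1) i (List.mem_range.mpr hi)
  simp only [Bool.and_eq_true, beq_iff_eq, List.all_eq_true, decide_eq_true_eq] at this
  exact this.2 a ha

lemma Bn_nodup {i : Nat} (hi : i < 11) : (Bn i).Nodup := by
  have := (List.all_eq_true.mp FN) i (List.mem_range.mpr hi)
  simpa using this

lemma natg_fact {v : Nat} (hv : v < 623) (hd : ¬ (89 ∣ v)) :
    (natg v).1 < 11 ∧ (natg v).2 ∈ Bn (natg v).1 ∧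
      ((natg v).2 + v) % 623 ∈ Bn (natg v).1 := by
  have := (List.all_eq_true.mp F4) v (List.mem_range.mpr hv)
  simp only [Bool.or_eq_true, Bool.and_eq_true, beq_iff_eq, decide_eq_true_eq,
    List.elem_eq_mem] at this
  rcases this with h | h
  · exact absurd (Nat.dvd_of_mod_eq_zero h) hd
  · exact ⟨h.1.1, h.1.2, h.2⟩

lemma natg_unique {i xv yv : Nat} (hi : i < 11) (hx : xv ∈ Bn i) (hy : yv ∈ Bn i)
    (hxy : xv ≠ yv) :
    ¬ (89 ∣ (yv + (623 - xv)) % 623) ∧ natg ((yv + (623 - xv)) % 623) = (i, xv) := by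
  have := (List.all_eq_true.mp F5) i (List.mem_range.mpr hi)
  simp only [List.all_eq_true] at this
  have h := this xv hx yv hy
  simp only [Bool.or_eq_true, Bool.and_eq_true, beq_iff_eq, bne_iff_ne, ne_eq,
    decide_eq_true_eq] at h
  rcases h with h | ⟨⟨h1, h2⟩, h3⟩
  · exact absurd h hxy
  · refine ⟨fun hdvd => h1 ?_, Prod.ext h2 h3⟩
    omega

/-! ### The point set and block data over `Z` -/

def B (i : Fin 11) : Finset Z := ((Bn i.val).map (Nat.cast : Nat → Z)).toFinset

lemma cast_inj_of_lt {a b : Nat} (ha : a < 623) (hb : b < 623)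
    (h : (a : Z) = (b : Z)) : a = b := by
  have := congrArg ZMod.val h
  rwa [ZMod.val_cast_of_lt ha, ZMod.val_cast_of_lt hb] at this

lemma cast_val (z : Z) : ((z.val : Nat) : Z) = z := ZMod.natCast_rightInverse z

lemma mem_B {i : Fin 11} {z : Z} : z ∈ B i ↔ z.val ∈ Bn i.val := by
  constructor
  · intro h
    simp only [B, List.mem_toFinset, List.mem_map] at h
    obtain ⟨a, ha, rfl⟩ := h
    rwa [ZMod.val_cast_of_lt (Bn_lt i.isLt ha)]
  · intro h
    simp only [B, List.mem_toFinset, List.mem_map]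
    exact ⟨z.val, h, cast_val z⟩

lemma card_B (i : Fin 11) : (B i).card = 8 := by
  rw [B, List.card_toFinset, List.dedup_eq_self.mpr, List.length_map, Bn_len i.isLt]
  exact (Bn_nodup i.isLt).map_on
    (fun x hx y hy h => cast_inj_of_lt (Bn_lt i.isLt hx) (Bn_lt i.isLt hy) h)

def H : Finset Z := Finset.univ.filter (fun z => 89 ∣ z.val)

lemma mem_H {z : Z} : z ∈ H ↔ 89 ∣ z.val := by simp [H]

lemma val_sub' (x y : Z) : (y - x).val = (y.val + (623 - x.val)) % 623 := by
  have hx : x.val ≤ 623 := le_of_lt x.val_lt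
  have key : (((y.val + (623 - x.val)) : Nat) : Z) = y - x := by
    rw [Nat.cast_add, Nat.cast_sub hx, cast_val, ZMod.natCast_self, zero_sub, cast_val]
    ring
  rw [← key, ZMod.val_natCast]

lemma H_zero : (0 : Z) ∈ H := by
  rw [mem_H, ZMod.val_zero]
  exact dvd_zero 89

lemma H_sub {x y : Z} (hx : x ∈ H) (hy : y ∈ H) : x - y ∈ H := by
  rw [mem_H] at *
  rw [val_sub' y x]
  have := x.val_lt
  have := y.val_lt
  omega

/-! ### Existence and uniqueness of difference representation over `Z` -/

lemma L4 {d : Z} (hd : d ∉ H) :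
    ∃ (i : Fin 11) (x : Z), natg d.val = (i.val, x.val) ∧ x ∈ B i ∧ x + d ∈ B i := by
  rw [mem_H] at hd
  obtain ⟨h1, h2, h3⟩ := natg_fact d.val_lt hd
  refine ⟨⟨(natg d.val).1, h1⟩, ((natg d.val).2 : Z), ?_, ?_, ?_⟩
  · rw [ZMod.val_cast_of_lt (Bn_lt h1 h2)]
  · rw [mem_B, ZMod.val_cast_of_lt (Bn_lt h1 h2)]; exact h2
  · rw [mem_B, ZMod.val_add, ZMod.val_cast_of_lt (Bn_lt h1 h2)]; exact h3

lemma L5 {i : Fin 11} {x y : Z} (hx : x ∈ B i) (hy : y ∈ B i) (hxy : x ≠ y) :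
    (y - x) ∉ H ∧ natg (y - x).val = (i.val, x.val) := by
  rw [mem_B] at hx hy
  have hne : x.val ≠ y.val := fun h => hxy (ZMod.val_injective 623 h)
  obtain ⟨h1, h2⟩ := natg_unique i.isLt hx hy hne
  rw [mem_H, val_sub']
  exact ⟨h1, h2⟩

/-! ### The blocks -/

def cosetBlock (t : Z) : Finset (Option Z) :=
  insert none ((H.image (fun h => t + h)).image some)

def transBlock (i : Fin 11) (t : Z) : Finset (Option Z) :=
  (B i).image (fun x => some (t + x))

def Blocks : Finset (Finset (Option Z)) :=
  (Finset.univ.image cosetBlock) ∪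
    (Finset.univ.image fun p : Fin 11 × Z => transBlock p.1 p.2)

lemma mem_Blocks {blk : Finset (Option Z)} : blk ∈ Blocks ↔
    (∃ t, blk = cosetBlock t) ∨ ∃ i t, blk = transBlock i t := by
  simp only [Blocks, Finset.mem_union, Finset.mem_image, Finset.mem_univ, true_and,
    Prod.exists]
  constructor
  · rintro (⟨t, rfl⟩ | ⟨i, t, rfl⟩)
    · exact Or.inl ⟨t, rfl⟩
    · exact Or.inr ⟨i, t, rfl⟩
  · rintro (⟨t, rfl⟩ | ⟨i, t, rfl⟩)
    · exact Or.inl ⟨t, rfl⟩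
    · exact Or.inr ⟨i, t, rfl⟩

lemma cosetBlock_mem (t : Z) : cosetBlock t ∈ Blocks :=
  mem_Blocks.mpr (Or.inl ⟨t, rfl⟩)

lemma transBlock_mem (i : Fin 11) (t : Z) : transBlock i t ∈ Blocks :=
  mem_Blocks.mpr (Or.inr ⟨i, t, rfl⟩)

lemma none_mem_cosetBlock (t : Z) : none ∈ cosetBlock t :=
  Finset.mem_insert_self _ _

lemma none_not_mem_transBlock (i : Fin 11) (t : Z) : none ∉ transBlock i t := by
  simp [transBlock]

lemma some_mem_cosetBlock {t a : Z} : some a ∈ cosetBlock t ↔ a - t ∈ H := by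
  unfold cosetBlock
  rw [Finset.mem_insert]
  simp only [reduceCtorEq, false_or, Finset.mem_image, Option.some.injEq]
  constructor
  · rintro ⟨x, ⟨h, hH, rfl⟩, rfl⟩
    simpa using hH
  · intro hH
    exact ⟨a, ⟨a - t, hH, by ring⟩, rfl⟩

lemma some_mem_transBlock {i : Fin 11} {t a : Z} :
    some a ∈ transBlock i t ↔ ∃ x ∈ B i, t + x = a := by
  simp [transBlock]

lemma cosetBlock_eq {t t' : Z} (h : t' - t ∈ H) : cosetBlock t = cosetBlock t' := by
  ext z
  match z with
  | none => simp [none_mem_cosetBlock]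
  | some a =>
    rw [some_mem_cosetBlock, some_mem_cosetBlock]
    constructor
    · intro ha
      have := H_sub ha h
      simpa [sub_sub_sub_cancel_right] using H_sub ha h
    · intro ha
      have h' : t - t' ∈ H := by simpa using H_sub H_zero h
      simpa [sub_sub_sub_cancel_right] using H_sub ha h'

/-! ### Block cardinalities -/

lemma card_cosetBlock (t : Z) : (cosetBlock t).card = 8 := by
  unfold cosetBlock
  rw [Finset.card_insert_of_notMem (by simp)]
  rw [Finset.card_image_of_injective _ (Option.some_injective _)]
  rw [Finset.card_image_of_injective _ (add_right_injective t)]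
  have : H.card = 7 := by
    have : H = ((([0, 89, 178, 267, 356, 445, 534] : List Nat)).map
        (Nat.cast : Nat → Z)).toFinset := by
      ext z
      rw [mem_H]
      simp only [List.mem_toFinset, List.mem_map]
      constructor
      · intro hz
        refine ⟨z.val, ?_, cast_val z⟩
        have := z.val_lt
        simp only [List.mem_cons, List.not_mem_nil, or_false]
        omega
      · rintro ⟨a, ha, rfl⟩
        rw [ZMod.val_natCast]
        simp only [List.mem_cons, List.not_mem_nil, or_false] at ha
        rcases ha with rfl|rfl|rfl|rfl|rfl|rfl|rfl <;> omega
    rw [this, List.card_toFinset, List.dedup_eq_self.mpr, List.length_map]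
    · rfl
    · refine List.Nodup.map_on ?_ (by decide)
      intro x hx y hy hxy
      simp only [List.mem_cons, List.not_mem_nil, or_false] at hx hy
      have hx' : x < 623 := by omega
      have hy' : y < 623 := by omega
      exact cast_inj_of_lt hx' hy' hxy
  rw [this]

lemma card_transBlock (i : Fin 11) (t : Z) : (transBlock i t).card = 8 := by
  unfold transBlock
  rw [Finset.card_image_of_injective, card_B]
  intro a b hab
  simpa using hab

/-! ### Pair coverage -/

lemma caseA (a : Z) : ∃! blk, blk ∈ Blocks ∧ none ∈ blk ∧ some a ∈ blk := by
  refine ⟨cosetBlock a, ⟨cosetBlock_mem a, none_mem_cosetBlock a, ?_⟩, ?_⟩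
  · rw [some_mem_cosetBlock, sub_self]; exact H_zero
  · rintro blk ⟨hmem, hn, ha⟩
    rcases mem_Blocks.mp hmem with ⟨t, rfl⟩ | ⟨i, t, rfl⟩
    · exact cosetBlock_eq (some_mem_cosetBlock.mp ha)
    · exact absurd hn (none_not_mem_transBlock i t)

lemma caseB {a b : Z} (hab : a ≠ b) :
    ∃! blk, blk ∈ Blocks ∧ some a ∈ blk ∧ some b ∈ blk := by
  by_cases hd : (b - a) ∈ H
  · -- covered by a coset block
    refine ⟨cosetBlock a, ⟨cosetBlock_mem a, ?_, ?_⟩, ?_⟩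
    · rw [some_mem_cosetBlock, sub_self]; exact H_zero
    · rw [some_mem_cosetBlock]; exact hd
    · rintro blk ⟨hmem, ha, hb⟩
      rcases mem_Blocks.mp hmem with ⟨t, rfl⟩ | ⟨i, t, rfl⟩
      · exact cosetBlock_eq (some_mem_cosetBlock.mp ha)
      · exfalso
        obtain ⟨x, hx, hxa⟩ := some_mem_transBlock.mp ha
        obtain ⟨y, hy, hyb⟩ := some_mem_transBlock.mp hb
        have hxy : x ≠ y := by
          rintro rfl; exact hab (hxa ▸ hyb ▸ rfl)
        have h5 := (L5 hx hy hxy).1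
        have : y - x = b - a := by
          rw [← hxa, ← hyb]; ring
        rw [this] at h5
        exact h5 hd
  · -- covered by a translate block
    obtain ⟨i, x, hg, hx, hxd⟩ := L4 hd
    refine ⟨transBlock i (a - x), ⟨transBlock_mem i (a - x), ?_, ?_⟩, ?_⟩
    · rw [some_mem_transBlock]; exact ⟨x, hx, by ring⟩
    · rw [some_mem_transBlock]; exact ⟨x + (b - a), hxd, by ring⟩
    · rintro blk ⟨hmem, ha, hb⟩
      rcases mem_Blocks.mp hmem with ⟨t, rfl⟩ | ⟨i', t, rfl⟩
      · exfalso
        have h1 := some_mem_cosetBlock.mp ha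
        have h2 := some_mem_cosetBlock.mp hb
        have := H_sub h2 h1
        rw [sub_sub_sub_cancel_right] at this
        exact hd this
      · obtain ⟨x', hx', hxa⟩ := some_mem_transBlock.mp ha
        obtain ⟨y', hy', hyb⟩ := some_mem_transBlock.mp hb
        have hxy : x' ≠ y' := by
          rintro rfl; exact hab (hxa ▸ hyb ▸ rfl)
        have h5 := (L5 hx' hy' hxy).2
        have hyx : y' - x' = b - a := by
          rw [← hxa, ← hyb]; ring
        rw [hyx, hg] at h5
        have hii : i = i' := Fin.ext (congrArg Prod.fst h5)
        have hxx : x = x' := ZMod.val_injective 623 (congrArg Prod.snd h5)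
        have ht : t = a - x := by rw [hxx]; exact eq_sub_of_add_eq hxa
        rw [ht, ← hii]

/-! ### Main theorem ingredients -/

theorem steiner : ∃ 𝓑 : Finset (Finset (Option Z)),
    (∀ b ∈ 𝓑, b.card = 8) ∧
    ∀ p : Finset (Option Z), p.card = 2 → ∃! b, b ∈ 𝓑 ∧ p ⊆ b := by
  refine ⟨Blocks, ?_, ?_⟩
  · intro b hb
    rcases mem_Blocks.mp hb with ⟨t, rfl⟩ | ⟨i, t, rfl⟩
    · exact card_cosetBlock t
    · exact card_transBlock i t
  · intro p hp
    obtain ⟨u, v, huv, rfl⟩ := Finset.card_eq_two.mp hp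
    simp only [Finset.insert_subset_iff, Finset.singleton_subset_iff]
    match u, v with
    | none, none => exact absurd rfl huv
    | none, some a => exact caseA a
    | some a, none =>
      obtain ⟨blk, ⟨h1, h2, h3⟩, hu⟩ := caseA a
      exact ⟨blk, ⟨h1, h3, h2⟩, fun y hy => hu y ⟨hy.1, hy.2.2, hy.2.1⟩⟩
    | some a, some b =>
      exact caseB (fun h => huv (by rw [h]))

end Steiner624

/-- There exists a Steiner system S(2,8,624). -/
theorem exists_steiner_system_2_8_624 :
    ∃ (V : Type) (_ : Fintype V), Fintype.card V = 624 ∧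
      ∃ 𝓑 : Finset (Finset V),
        (∀ b ∈ 𝓑, b.card = 8) ∧
        ∀ p : Finset V, p.card = 2 → ∃! b, b ∈ 𝓑 ∧ p ⊆ b := by
  refine ⟨Option Steiner624.Z, inferInstance, ?_, Steiner624.steiner⟩
  rw [Fintype.card_option, ZMod.card]
end

section
/- Let G be a finite group of order v, let k ≥ 2 be coprime to v, and let B₁, …, Bₙ be k-element subsets of G such that the difference sets ΔB₁, …, ΔBₙ are pairwise disjoint, each has cardinality k(k−1), and their union is G \ {1}. Then the translates form a Steiner system S(2,k,v): for every 2-element subset {x,y} of G there is exactly one pair (i,g) with i ∈ {1,…,n} and g ∈ G such that {x,y} ⊆ Bᵢ·g. -/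
/-- The set of differences `ΔB = {a * c⁻¹ : a, c ∈ B, a ≠ c}` of a finite subset
of a (multiplicatively written) group. -/
def diffSet {G : Type*} [Group G] [DecidableEq G] (B : Finset G) : Finset G :=
  ((B ×ˢ B).filter fun p => p.1 ≠ p.2).image fun p => p.1 * p.2⁻¹

lemma diffSet_filter_card {G : Type*} [Group G] [DecidableEq G] (B : Finset G) :
    ((B ×ˢ B).filter fun p => p.1 ≠ p.2).card = B.card * B.card - B.card := by
  have hsplit : ((B ×ˢ B).filter fun p => p.1 = p.2).card
      + ((B ×ˢ B).filter fun p => p.1 ≠ p.2).card = (B ×ˢ B).card :=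
    Finset.card_filter_add_card_filter_not _
  have hdiag : ((B ×ˢ B).filter fun p => p.1 = p.2) = B.image fun a => (a, a) := by
    ext ⟨a, c⟩
    simp only [Finset.mem_filter, Finset.mem_product, Finset.mem_image, Prod.mk.injEq]
    constructor
    · rintro ⟨⟨ha, _⟩, rfl⟩; exact ⟨a, ha, rfl, rfl⟩
    · rintro ⟨b, hb, rfl, rfl⟩; exact ⟨⟨hb, hb⟩, rfl⟩
  have hdiagcard : ((B ×ˢ B).filter fun p => p.1 = p.2).card = B.card := by
    rw [hdiag]
    exact Finset.card_image_of_injective _ (fun a b h => (Prod.mk.injEq _ _ _ _).mp h |>.1)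
  have := Finset.card_product B B
  omega

/-- A difference family on a group of order `v`, with block size `k` coprime to `v`,
yields a Steiner system `S(2,k,v)` via right translates: every 2-element subset of `G`
is contained in exactly one translate `Bᵢ · g`. -/
theorem difference_family_translates_steiner
    {G : Type*} [Group G] [Fintype G] [DecidableEq G] {v k n : ℕ}
    (hv : Fintype.card G = v) (hk : 2 ≤ k) (hcop : Nat.Coprime k v)
    (B : Fin n → Finset G)
    (hcard : ∀ i, (B i).card = k)
    (hdisj : ∀ i j, i ≠ j → Disjoint (diffSet (B i)) (diffSet (B j)))
    (hΔcard : ∀ i, (diffSet (B i)).card = k * (k - 1))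
    (hunion : (Finset.univ.biUnion fun i => diffSet (B i)) = Finset.univ \ {1}) :
    ∀ p : Finset G, p.card = 2 →
      ∃! ig : Fin n × G, p ⊆ (B ig.1).image (· * ig.2) := by
  -- injectivity of the difference map on each block
  have hinj : ∀ i, Set.InjOn (fun p : G × G => p.1 * p.2⁻¹)
      ((B i ×ˢ B i).filter fun p => p.1 ≠ p.2) := by
    intro i
    rw [← Finset.card_image_iff]
    have h1 := diffSet_filter_card (B i)
    have h2 := hΔcard i
    unfold diffSet at h2
    rw [h2, h1, hcard i, Nat.mul_sub_one]
  rintro p hp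
  obtain ⟨x, y, hxy, rfl⟩ := Finset.card_eq_two.mp hp
  have hd1 : x * y⁻¹ ≠ 1 := fun h => hxy (mul_inv_eq_one.mp h)
  have hdmem : x * y⁻¹ ∈ Finset.univ.biUnion fun i => diffSet (B i) := by
    rw [hunion]; simp [hd1]
  rw [Finset.mem_biUnion] at hdmem
  obtain ⟨i, -, hdi⟩ := hdmem
  unfold diffSet at hdi
  rw [Finset.mem_image] at hdi
  obtain ⟨⟨a, c⟩, hacmem, hac⟩ := hdi
  have hacm := Finset.mem_filter.mp hacmem
  obtain ⟨hprod, hne⟩ := hacm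
  rw [Finset.mem_product] at hprod
  have h1 : c * a⁻¹ = y * x⁻¹ := by
    have := congrArg (·⁻¹) hac
    simpa [mul_inv_rev] using this
  have hy : c * (a⁻¹ * x) = y := by
    rw [← mul_assoc, h1]; group
  refine ⟨(i, a⁻¹ * x), ?_, ?_⟩
  · intro z hz
    rw [Finset.mem_insert, Finset.mem_singleton] at hz
    rw [Finset.mem_image]
    rcases hz with rfl | rfl
    · exact ⟨a, hprod.1, by group⟩
    · exact ⟨c, hprod.2, hy⟩
  · rintro ⟨j, h⟩ hsub
    have hxmem := hsub (Finset.mem_insert_self x {y})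
    have hymem := hsub (Finset.mem_insert_of_mem (Finset.mem_singleton_self y))
    rw [Finset.mem_image] at hxmem hymem
    obtain ⟨a', ha', hax⟩ := hxmem
    obtain ⟨c', hc', hcy⟩ := hymem
    simp only at hax hcy
    have hane : a' ≠ c' := by rintro rfl; exact hxy (hax ▸ hcy ▸ rfl)
    have hd' : a' * c'⁻¹ = x * y⁻¹ := by
      rw [← hax, ← hcy]; group
    have hmem' : (a', c') ∈ (B j ×ˢ B j).filter fun p => p.1 ≠ p.2 := by
      rw [Finset.mem_filter, Finset.mem_product]; exact ⟨⟨ha', hc'⟩, hane⟩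
    have hji : j = i := by
      by_contra hji
      have hdj : x * y⁻¹ ∈ diffSet (B j) := by
        unfold diffSet; rw [Finset.mem_image]; exact ⟨(a', c'), hmem', hd'⟩
      have hdi' : x * y⁻¹ ∈ diffSet (B i) := by
        unfold diffSet; rw [Finset.mem_image]; exact ⟨(a, c), hacmem, hac⟩
      exact Finset.disjoint_left.mp (hdisj j i hji) hdj hdi'
    subst hji
    have heq : (a', c') = (a, c) := by
      apply hinj _ (by exact_mod_cast hmem') (by exact_mod_cast hacmem)
      simp only
      rw [hd', hac]
    obtain ⟨rfl, rfl⟩ := Prod.mk.injEq .. |>.mp heq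
    have : h = a'⁻¹ * x := by rw [← hax]; group
    rw [Prod.mk.injEq]
    exact ⟨rfl, this⟩
end
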